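/- For n_f = 4 and generators of su(4) in the standard basis, the decay width ratio of off-diagonal to diagonal transient dark pions, under the assumption κ_{αi} = κ for α,i ∈ {1,2,3} and κ_{4i}=0, yields cτ^{off-diag} = (3/4)·cτ^{diag}; equivalently, Γ^{off-diag}/Γ^{diag} = 4/3, where Γ^{off-diag} ∝ Σ_{ij}|κ|⁴ M_{ij} and Γ^{diag} ∝ 2 Σ_{ij}|Σ_{α} κ (T^b)_{αα}|² M_{ij} summed with the same kinematic factors M_{ij}, for b ∈ {3, 8, 15}, Σ over i,j ∈ {1,2,3}. -/
import Mathlib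

open BigOperators

noncomputable section

/-- The diagonal entries `(T^b)_{αα}`, `α = 1,2,3`, of the diagonal su(4) generators
`T^3 = diag(1,−1,0,0)/2`, `T^8 = diag(1,1,−2,0)/(2√3)`, `T^15 = diag(1,1,1,−3)/(2√6)`. -/
def tdiag : Fin 3 → Fin 3 → ℝ :=
  ![![1 / 2, -(1 / 2), 0],
    ![1 / (2 * Real.sqrt 3), 1 / (2 * Real.sqrt 3), -(1 / Real.sqrt 3)],
    ![1 / (2 * Real.sqrt 6), 1 / (2 * Real.sqrt 6), 1 / (2 * Real.sqrt 6)]]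

/-- With `κ_{αi} = κ` for `α,i ∈ {1,2,3}` and `κ_{4i} = 0`, the off-diagonal transient
dark pion width `Γ^{off} = C Σ_{ij} κ⁴ M_{ij}` and the diagonal width
`Γ^{diag} = Σ_{b∈{3,8,15}} 2C Σ_{ij} |Σ_α κ² (T^b)_{αα}|² M_{ij}` satisfy
`Γ^{off} = (4/3)·Γ^{diag}`, i.e. `cτ^{off} = (3/4)·cτ^{diag}`. -/
theorem transient_pion_lifetime_ratio (C κ : ℝ) (M : Fin 3 → Fin 3 → ℝ) :
    (∑ i : Fin 3, ∑ j : Fin 3, C * κ ^ 4 * M i j)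
      = (4 / 3) * ∑ b : Fin 3, ∑ i : Fin 3, ∑ j : Fin 3,
          2 * C * (κ ^ 2 * ∑ α : Fin 3, tdiag b α) ^ 2 * M i j := by
  have h3 : Real.sqrt 3 ≠ 0 := by positivity
  have h6 : Real.sqrt 6 ^ 2 = 6 := Real.sq_sqrt (by norm_num)
  simp only [tdiag, Fin.sum_univ_three, Matrix.cons_val_zero, Matrix.cons_val_one,
    Matrix.head_cons, Matrix.cons_val_two, Matrix.tail_cons]
  field_simp
  ring_nf
  rw [h6]
  ring
end
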